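/- (Whitney factorization pointwise bounds.) Let (α₁,α₂) be consistent Whitney parameters, W* the Whitney box with parameters (α₁(1+√α₂)⁻¹, √α₂), W** the one with parameters (α₁[2(1+√α₂)α₂^{1/4}]⁻¹, α₂^{1/4}), and W the one with (α₁,α₂). Let 0 < r < ∞ and u ∈ L^r_loc(ℝ^{n+1}_+), u ≥ 0, and set v(y,t) = (|W*(y,t)|⁻¹ ∫∫_{W*(y,t)} u^r)^{1/r}. Then for all (y,t): (i) sup_{(z,s)∈W*(y,t)} v(z,s) ≤ C · (|W(y,t)|⁻¹ ∫∫_{W(y,t)} u^r)^{1/r}, and (ii) inf_{(z,s)∈W**(y,t)} v(z,s) ≥ c · (|W**(y,t)|⁻¹ ∫∫_{W**(y,t)} u^r)^{1/r}, with constants C, c > 0 depending only on n, r, α₁, α₂. -/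

import Mathlib

/-!
If `(z,s) ∈ W*(y,t)` then `W*(z,s) ⊆ W(y,t)` by the triangle inequality, and if `(z,s) ∈ W**(y,t)`
then `(y,t)` lies in a Whitney box around `(z,s)`, whence `W**(y,t) ⊆ W*(z,s)`. In both cases the
heights `s` and `t` are comparable, and `|W_β(y,t)| = t^(n+1) |W_β(0,1)|`, so the two boxes have
comparable volumes. An average over the smaller box is then at most a fixed multiple of the
average over the larger one, which gives both pointwise bounds after taking `r`-th roots.
-/

open MeasureTheory Metric Set

/-- The Whitney box with parameters (β₁, β₂) at the point q = (y,t). -/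
def whitneyBox (n : ℕ) (β₁ β₂ : ℝ) (q : EuclideanSpace ℝ (Fin n) × ℝ) :
    Set (EuclideanSpace ℝ (Fin n) × ℝ) :=
  {p | dist p.1 q.1 < β₁ * q.2 ∧ β₂⁻¹ * q.2 < p.2 ∧ p.2 < β₂ * q.2}

/-- The L^r Whitney average over the (β₁,β₂)-Whitney box at p. -/
noncomputable def whitneyAvg (n : ℕ) (β₁ β₂ r : ℝ)
    (u : EuclideanSpace ℝ (Fin n) × ℝ → ENNReal)
    (p : EuclideanSpace ℝ (Fin n) × ℝ) : ENNReal :=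
  ((volume (whitneyBox n β₁ β₂ p))⁻¹ * ∫⁻ w in whitneyBox n β₁ β₂ p, u w ^ r) ^ (1/r)

open ENNReal

section WhitneyBox

variable {n : ℕ} {β₁ β₂ γ₁ γ₂ δ₁ δ₂ : ℝ}

theorem whitneyBox_eq_prod (q : EuclideanSpace ℝ (Fin n) × ℝ) :
    whitneyBox n β₁ β₂ q = ball q.1 (β₁ * q.2) ×ˢ Ioo (β₂⁻¹ * q.2) (β₂ * q.2) := by
  ext p
  simp [whitneyBox]

theorem isOpen_whitneyBox (q : EuclideanSpace ℝ (Fin n) × ℝ) : IsOpen (whitneyBox n β₁ β₂ q) := by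
  rw [whitneyBox_eq_prod]
  exact isOpen_ball.prod isOpen_Ioo

theorem self_mem_whitneyBox (hβ₁ : 0 < β₁) (hβ₂ : 1 < β₂) {q : EuclideanSpace ℝ (Fin n) × ℝ}
    (hq : 0 < q.2) : q ∈ whitneyBox n β₁ β₂ q := by
  refine ⟨by simpa using mul_pos hβ₁ hq, ?_, lt_mul_left hq hβ₂⟩
  exact (mul_lt_iff_lt_one_left hq).2 (inv_lt_one_of_one_lt₀ hβ₂)

theorem volume_whitneyBox_ne_zero (hβ₁ : 0 < β₁) (hβ₂ : 1 < β₂)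
    {q : EuclideanSpace ℝ (Fin n) × ℝ} (hq : 0 < q.2) : volume (whitneyBox n β₁ β₂ q) ≠ 0 :=
  (isOpen_whitneyBox q).measure_ne_zero volume ⟨q, self_mem_whitneyBox hβ₁ hβ₂ hq⟩

theorem volume_whitneyBox_ne_top (q : EuclideanSpace ℝ (Fin n) × ℝ) :
    volume (whitneyBox n β₁ β₂ q) ≠ ⊤ := by
  rw [whitneyBox_eq_prod, Measure.volume_eq_prod, Measure.prod_prod]
  exact mul_ne_top measure_ball_lt_top.ne (by simp)

theorem volume_whitneyBox_of_pos (y : EuclideanSpace ℝ (Fin n)) {t : ℝ} (ht : 0 < t) :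
    volume (whitneyBox n β₁ β₂ (y, t)) =
      ENNReal.ofReal (t ^ (n + 1)) * volume (whitneyBox n β₁ β₂ (0, 1)) := by
  simp only [whitneyBox_eq_prod, Measure.volume_eq_prod, Measure.prod_prod, Real.volume_Ioo,
    mul_comm β₁ t, Measure.addHaar_ball_mul_of_pos _ _ ht, finrank_euclideanSpace_fin, mul_one]
  rw [← sub_mul, mul_comm _ t, ENNReal.ofReal_mul ht.le, pow_succ,
    ENNReal.ofReal_mul (by positivity)]
  ring

theorem exists_volume_whitneyBox_le_mul (hγ₁ : 0 < γ₁) (hγ₂ : 1 < γ₂) (c : ℝ) :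
    ∃ K : ℝ≥0∞, K ≠ ⊤ ∧ ∀ (y z : EuclideanSpace ℝ (Fin n)) (t s : ℝ), 0 < t → 0 < s →
      t ≤ c * s → volume (whitneyBox n β₁ β₂ (y, t)) ≤ K * volume (whitneyBox n γ₁ γ₂ (z, s)) := by
  refine ⟨ENNReal.ofReal (c ^ (n + 1)) * volume (whitneyBox n β₁ β₂ (0, 1)) /
    volume (whitneyBox n γ₁ γ₂ (0, 1)), ?_, fun y z t s ht hs hts => ?_⟩
  · exact div_ne_top (mul_ne_top ofReal_ne_top (volume_whitneyBox_ne_top _))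
      (volume_whitneyBox_ne_zero hγ₁ hγ₂ one_pos)
  have hpow : ENNReal.ofReal (t ^ (n + 1)) ≤
      ENNReal.ofReal (c ^ (n + 1)) * ENNReal.ofReal (s ^ (n + 1)) := by
    have hc : 0 ≤ c := by nlinarith
    rw [← ENNReal.ofReal_mul (by positivity), ← mul_pow]
    exact ENNReal.ofReal_le_ofReal (pow_le_pow_left₀ ht.le hts _)
  rw [volume_whitneyBox_of_pos y ht, volume_whitneyBox_of_pos z hs]
  calc ENNReal.ofReal (t ^ (n + 1)) * volume (whitneyBox n β₁ β₂ (0, 1))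
      ≤ ENNReal.ofReal (c ^ (n + 1)) * ENNReal.ofReal (s ^ (n + 1)) *
          volume (whitneyBox n β₁ β₂ (0, 1)) := by gcongr
    _ = ENNReal.ofReal (c ^ (n + 1)) * ENNReal.ofReal (s ^ (n + 1)) *
          (volume (whitneyBox n β₁ β₂ (0, 1)) / volume (whitneyBox n γ₁ γ₂ (0, 1)) *
            volume (whitneyBox n γ₁ γ₂ (0, 1))) := by
      rw [ENNReal.div_mul_cancel (volume_whitneyBox_ne_zero hγ₁ hγ₂ one_pos)
        (volume_whitneyBox_ne_top _)]
    _ = _ := by rw [mul_div_assoc]; ring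

theorem mem_whitneyBox_swap (hβ₁ : 0 ≤ β₁) (hβ₂ : 0 < β₂) {p q : EuclideanSpace ℝ (Fin n) × ℝ}
    (hp : p ∈ whitneyBox n β₁ β₂ q) : q ∈ whitneyBox n (β₁ * β₂) β₂ p := by
  obtain ⟨hdist, hlow, hhigh⟩ := hp
  have hq : q.2 < β₂ * p.2 := by rwa [inv_mul_lt_iff₀ hβ₂] at hlow
  refine ⟨?_, ?_, hq⟩
  · rw [dist_comm, mul_assoc]
    exact hdist.trans_le (mul_le_mul_of_nonneg_left hq.le hβ₁)
  · rwa [inv_mul_lt_iff₀ hβ₂]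

theorem whitneyBox_subset_of_mem (hδ₁ : 0 ≤ δ₁) (hγ₂ : 0 < γ₂) (hδ₂ : 0 < δ₂)
    (h₁ : γ₁ + γ₂ * δ₁ ≤ β₁) (h₂ : γ₂ * δ₂ ≤ β₂) {p q : EuclideanSpace ℝ (Fin n) × ℝ}
    (hq : 0 ≤ q.2) (hp : p ∈ whitneyBox n γ₁ γ₂ q) :
    whitneyBox n δ₁ δ₂ p ⊆ whitneyBox n β₁ β₂ q := by
  obtain ⟨hpd, hpl, hph⟩ := hp
  rintro w ⟨hwd, hwl, hwh⟩
  refine ⟨?_, ?_, ?_⟩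
  · calc dist w.1 q.1 ≤ dist w.1 p.1 + dist p.1 q.1 := dist_triangle _ _ _
      _ < δ₁ * p.2 + γ₁ * q.2 := add_lt_add hwd hpd
      _ ≤ δ₁ * (γ₂ * q.2) + γ₁ * q.2 := by gcongr
      _ ≤ β₁ * q.2 := by nlinarith
  · calc β₂⁻¹ * q.2 ≤ (γ₂ * δ₂)⁻¹ * q.2 := by gcongr
      _ = δ₂⁻¹ * (γ₂⁻¹ * q.2) := by rw [mul_inv]; ring
      _ < δ₂⁻¹ * p.2 := by gcongr
      _ < w.2 := hwl
  · calc w.2 < δ₂ * p.2 := hwh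
      _ < δ₂ * (γ₂ * q.2) := by gcongr
      _ ≤ β₂ * q.2 := by nlinarith

end WhitneyBox

section Average

variable {X : Type*} [MeasurableSpace X] {μ : Measure X}

theorem setLAverage_le_mul_setLAverage_of_subset {S T : Set X} {K : ℝ≥0∞} (f : X → ℝ≥0∞)
    (hST : S ⊆ T) (hS : μ S ≠ 0) (hT : μ T ≠ ⊤) (hK : μ T ≤ K * μ S) :
    ⨍⁻ x in S, f x ∂μ ≤ K * ⨍⁻ x in T, f x ∂μ := by
  have hinv : (μ S)⁻¹ ≤ K * (μ T)⁻¹ := by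
    rw [← div_eq_mul_inv,
      ENNReal.le_div_iff_mul_le (Or.inl (mt (measure_mono_null hST) hS)) (Or.inl hT),
      ENNReal.inv_mul_le_iff hS (measure_ne_top_of_subset hST hT), mul_comm]
    exact hK
  simp only [setLAverage_eq, div_eq_mul_inv]
  calc (∫⁻ x in S, f x ∂μ) * (μ S)⁻¹ ≤ (∫⁻ x in T, f x ∂μ) * (K * (μ T)⁻¹) := by
        gcongr
    _ = K * ((∫⁻ x in T, f x ∂μ) * (μ T)⁻¹) := by ring

end Average

section WhitneyAvg

variable {n : ℕ} {β₁ β₂ γ₁ γ₂ δ₁ δ₂ r : ℝ}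

theorem whitneyAvg_eq_setLAverage (u : EuclideanSpace ℝ (Fin n) × ℝ → ℝ≥0∞)
    (p : EuclideanSpace ℝ (Fin n) × ℝ) :
    whitneyAvg n β₁ β₂ r u p = (⨍⁻ w in whitneyBox n β₁ β₂ p, u w ^ r ∂volume) ^ (1 / r) := by
  rw [whitneyAvg, setLAverage_eq, ENNReal.div_eq_inv_mul]

theorem whitneyAvg_le_of_subset (hr : 0 ≤ r) (u : EuclideanSpace ℝ (Fin n) × ℝ → ℝ≥0∞)
    {p q : EuclideanSpace ℝ (Fin n) × ℝ} {K : ℝ≥0∞} (hγ₁ : 0 < γ₁) (hγ₂ : 1 < γ₂) (hp : 0 < p.2)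
    (hsub : whitneyBox n γ₁ γ₂ p ⊆ whitneyBox n β₁ β₂ q)
    (hK : volume (whitneyBox n β₁ β₂ q) ≤ K * volume (whitneyBox n γ₁ γ₂ p)) :
    whitneyAvg n γ₁ γ₂ r u p ≤ K ^ (1 / r) * whitneyAvg n β₁ β₂ r u q := by
  simp only [whitneyAvg_eq_setLAverage]
  rw [← ENNReal.mul_rpow_of_nonneg _ _ (by positivity)]
  exact ENNReal.rpow_le_rpow (setLAverage_le_mul_setLAverage_of_subset _ hsub
    (volume_whitneyBox_ne_zero hγ₁ hγ₂ hp) (volume_whitneyBox_ne_top q) hK) (by positivity)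

theorem exists_whitneyAvg_le_of_mem (hr : 0 ≤ r) (hγ₁ : 0 < γ₁) (hγ₂ : 1 < γ₂)
    (h₁ : γ₁ + γ₂ * γ₁ ≤ β₁) (h₂ : γ₂ * γ₂ ≤ β₂) :
    ∃ C : ℝ≥0∞, C ≠ ⊤ ∧ ∀ (u : EuclideanSpace ℝ (Fin n) × ℝ → ℝ≥0∞)
      (y : EuclideanSpace ℝ (Fin n)) (t : ℝ), 0 < t → ∀ p ∈ whitneyBox n γ₁ γ₂ (y, t),
        whitneyAvg n γ₁ γ₂ r u p ≤ C * whitneyAvg n β₁ β₂ r u (y, t) := by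
  obtain ⟨K, hK, hvol⟩ :=
    exists_volume_whitneyBox_le_mul (n := n) (β₁ := β₁) (β₂ := β₂) hγ₁ hγ₂ γ₂
  refine ⟨K ^ (1 / r), rpow_ne_top_of_nonneg (by positivity) hK, fun u y t ht ⟨z, s⟩ hp => ?_⟩
  have hγ₂_pos : 0 < γ₂ := one_pos.trans hγ₂
  have hs : 0 < s := (mul_pos (inv_pos.2 hγ₂_pos) ht).trans hp.2.1
  have hts : t < γ₂ * s := (mem_whitneyBox_swap hγ₁.le hγ₂_pos hp).2.2
  exact whitneyAvg_le_of_subset hr u hγ₁ hγ₂ hs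
    (whitneyBox_subset_of_mem hγ₁.le hγ₂_pos hγ₂_pos h₁ h₂ ht.le hp) (hvol y z t s ht hs hts.le)

theorem exists_le_whitneyAvg_of_mem (hr : 0 ≤ r) (hδ₁ : 0 < δ₁) (hδ₂ : 1 < δ₂)
    (h₁ : 2 * δ₁ * δ₂ ≤ γ₁) (h₂ : δ₂ * δ₂ ≤ γ₂) :
    ∃ c : ℝ≥0∞, c ≠ 0 ∧ ∀ (u : EuclideanSpace ℝ (Fin n) × ℝ → ℝ≥0∞)
      (y : EuclideanSpace ℝ (Fin n)) (t : ℝ), 0 < t → ∀ p ∈ whitneyBox n δ₁ δ₂ (y, t),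
        c * whitneyAvg n δ₁ δ₂ r u (y, t) ≤ whitneyAvg n γ₁ γ₂ r u p := by
  have hδ₂_pos : 0 < δ₂ := one_pos.trans hδ₂
  obtain ⟨K, hK, hvol⟩ :=
    exists_volume_whitneyBox_le_mul (n := n) (β₁ := γ₁) (β₂ := γ₂) hδ₁ hδ₂ δ₂
  refine ⟨(K ^ (1 / r))⁻¹, ENNReal.inv_ne_zero.2 (rpow_ne_top_of_nonneg (by positivity) hK),
    fun u y t ht ⟨z, s⟩ hp => ?_⟩
  have hs : 0 < s := (mul_pos (inv_pos.2 hδ₂_pos) ht).trans hp.2.1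
  have hsub : whitneyBox n δ₁ δ₂ (y, t) ⊆ whitneyBox n γ₁ γ₂ (z, s) :=
    whitneyBox_subset_of_mem hδ₁.le hδ₂_pos hδ₂_pos (by linarith) h₂ hs.le
      (mem_whitneyBox_swap hδ₁.le hδ₂_pos hp)
  rw [← ENNReal.div_eq_inv_mul]
  exact ENNReal.div_le_of_le_mul'
    (whitneyAvg_le_of_subset hr u hδ₁ hδ₂ ht hsub (hvol z y s t hs ht hp.2.2.le))

end WhitneyAvg

/-- Whitney factorization pointwise bounds: with
α₁* = α₁(1+√α₂)⁻¹, α₂* = √α₂, α₁** = α₁[2(1+√α₂)α₂^{1/4}]⁻¹, α₂** = α₂^{1/4},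
and v = L^r average of u over W*, one has
sup_{W*(y,t)} v ≤ C (avg_{W(y,t)} u^r)^{1/r} and
inf_{W**(y,t)} v ≥ c (avg_{W**(y,t)} u^r)^{1/r}. -/
theorem whitney_factorization_bounds (n : ℕ) (α₁ α₂ r : ℝ)
    (h1 : 0 < α₁) (h2 : α₁ < α₂⁻¹) (h3 : α₂⁻¹ < 1) (hr : 0 < r) :
    ∃ C c : ENNReal, 0 < c ∧ C ≠ ⊤ ∧
      ∀ u : EuclideanSpace ℝ (Fin n) × ℝ → ENNReal, Measurable u →
        ∀ (y : EuclideanSpace ℝ (Fin n)) (t : ℝ), 0 < t →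
          (∀ p ∈ whitneyBox n (α₁ * (1 + Real.sqrt α₂)⁻¹) (Real.sqrt α₂) (y, t),
            whitneyAvg n (α₁ * (1 + Real.sqrt α₂)⁻¹) (Real.sqrt α₂) r u p ≤
              C * whitneyAvg n α₁ α₂ r u (y, t)) ∧
          (∀ p ∈ whitneyBox n (α₁ * (2 * (1 + Real.sqrt α₂) * α₂ ^ ((1:ℝ)/4))⁻¹)
              (α₂ ^ ((1:ℝ)/4)) (y, t),
            c * whitneyAvg n (α₁ * (2 * (1 + Real.sqrt α₂) * α₂ ^ ((1:ℝ)/4))⁻¹)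
                (α₂ ^ ((1:ℝ)/4)) r u (y, t) ≤
              whitneyAvg n (α₁ * (1 + Real.sqrt α₂)⁻¹) (Real.sqrt α₂) r u p) := by
  have hα₂_pos : 0 < α₂ := inv_pos.1 (h1.trans h2)
  have hα₂ : 1 < α₂ := (inv_lt_one₀ hα₂_pos).1 h3
  set a := Real.sqrt α₂
  set b := α₂ ^ ((1:ℝ)/4)
  have ha : 1 < a := by simpa using Real.sqrt_lt_sqrt zero_le_one hα₂
  have hb : 1 < b := Real.one_lt_rpow hα₂ (by norm_num)
  have haa : a * a = α₂ := Real.mul_self_sqrt hα₂_pos.le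
  have hbb : b * b = a := by
    rw [← Real.rpow_add hα₂_pos, show a = α₂ ^ ((1:ℝ) / 2) from Real.sqrt_eq_rpow α₂]
    norm_num
  have hγ : α₁ * (1 + a)⁻¹ + a * (α₁ * (1 + a)⁻¹) = α₁ := by field_simp
  have hδ : 2 * (α₁ * (2 * (1 + a) * b)⁻¹) * b = α₁ * (1 + a)⁻¹ := by field_simp
  obtain ⟨C, hC, hi⟩ := exists_whitneyAvg_le_of_mem (n := n) hr.le (by positivity) ha hγ.le haa.le
  obtain ⟨c, hc, hii⟩ := exists_le_whitneyAvg_of_mem (n := n) hr.le (by positivity) hb hδ.le hbb.le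
  exact ⟨C, c, pos_iff_ne_zero.2 hc, hC, fun u _ y t ht => ⟨hi u y t ht, hii u y t ht⟩⟩
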